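/- arXiv:2506.10838 — 3 statements merged into one kernel-verified Lean document; each statement's English description precedes it below -/
import Mathlib

section
/- Let f and g be coprime integer polynomials of positive degree. If gcd(L(f), L(g)) = 1, then B(f,g) = r(f,g). -/
open Polynomial

/-- `B` is a positive common denominator for the (unique) Bezout cofactors `p, q` in `ℚ[x]`
with `deg p < deg g`, `deg q < deg f` and `p*f + q*g = 1`, i.e. `B*p, B*q` lie in `ℤ[x]`. -/
def IsBezoutDenom (f g : Polynomial ℤ) (B : ℤ) : Prop :=
  0 < B ∧ ∃ p q : Polynomial ℚ,
    p.degree < (g.map (Int.castRingHom ℚ)).degree ∧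
    q.degree < (f.map (Int.castRingHom ℚ)).degree ∧
    p * f.map (Int.castRingHom ℚ) + q * g.map (Int.castRingHom ℚ) = 1 ∧
    (∃ P : Polynomial ℤ, P.map (Int.castRingHom ℚ) = Polynomial.C (B : ℚ) * p) ∧
    (∃ Q : Polynomial ℤ, Q.map (Int.castRingHom ℚ) = Polynomial.C (B : ℚ) * q)

/-! Pseudo-dividing `u` by `g` in `u f + v g = s` gives `L(g)^k u = a g + b` with
`deg b < deg g`, so `b f + (L(g)^k v + a f) g = L(g)^k s`; by uniqueness of the Bezout
cofactors, `L(g)^k s · p` and `L(g)^k s · q` have integer coefficients. Symmetrically so do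
`L(f)^j s · p` and `L(f)^j s · q`, and since `L(f)` and `L(g)` are coprime, `s p` and `s q` are
integral. Thus every positive integer in the ideal `(f, g)` is a common denominator of the
cofactors, while every such denominator `B = (B p) f + (B q) g` lies in the ideal. -/

namespace Polynomial

theorem exists_C_leadingCoeff_pow_mul_eq_mul_add {R : Type*} [CommRing R] [IsDomain R]
    {g : R[X]} (hg : g ≠ 0) (u : R[X]) :
    ∃ (k : ℕ) (a b : R[X]), C g.leadingCoeff ^ k * u = a * g + b ∧ b.degree < g.degree := by
  induction u using (InvImage.wf degree wellFounded_lt).induction with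
  | _ u ih =>
  by_cases hlt : u.degree < g.degree
  · exact ⟨0, 0, u, by simp, hlt⟩
  have hu : u ≠ 0 := by
    rintro rfl; exact hlt (by simpa [bot_lt_iff_ne_bot] using hg)
  have hLg : g.leadingCoeff ≠ 0 := leadingCoeff_ne_zero.mpr hg
  set z := C u.leadingCoeff * X ^ (u.natDegree - g.natDegree)
  have hdeg : (C g.leadingCoeff * u - z * g).degree < u.degree := by
    have hle : g.natDegree ≤ u.natDegree := natDegree_le_natDegree (not_lt.mp hlt)
    have := degree_sub_lt_left (p := C g.leadingCoeff * u) (q := z * g) ?_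
      (mul_ne_zero (C_ne_zero.mpr hLg) hu) ?_
    · rwa [degree_C_mul hLg] at this
    · rw [degree_C_mul hLg, degree_mul, degree_C_mul_X_pow _ (leadingCoeff_ne_zero.mpr hu),
        degree_eq_natDegree hg, degree_eq_natDegree hu, ← Nat.cast_add, Nat.sub_add_cancel hle]
    · rw [leadingCoeff_mul, leadingCoeff_mul, leadingCoeff_C, leadingCoeff_C_mul_X_pow,
        mul_comm]
  obtain ⟨k, a, b, hab, hb⟩ := ih _ hdeg
  refine ⟨k + 1, C g.leadingCoeff ^ k * z + a, b, ?_, hb⟩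
  linear_combination hab

theorem _root_.IsCoprime.eq_of_mul_add_mul_eq {S : Type*} [CommRing S] [IsDomain S]
    {F G p₁ q₁ p₂ q₂ : S[X]} (hcop : IsCoprime F G)
    (hp₁ : p₁.degree < G.degree) (hp₂ : p₂.degree < G.degree)
    (h : p₁ * F + q₁ * G = p₂ * F + q₂ * G) : p₁ = p₂ ∧ q₁ = q₂ := by
  have hG : G ≠ 0 := by rintro rfl; simp at hp₁
  have hdvd : G ∣ p₁ - p₂ :=
    hcop.symm.dvd_of_dvd_mul_right ⟨q₂ - q₁, by linear_combination h⟩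
  have hp : p₁ = p₂ := sub_eq_zero.mp <|
    eq_zero_of_dvd_of_degree_lt hdvd ((degree_sub_le _ _).trans_lt (max_lt hp₁ hp₂))
  subst hp
  exact ⟨rfl, mul_right_cancel₀ hG (add_left_cancel h)⟩

theorem mem_lifts_of_isCoprime {R S : Type*} [CommSemiring R] [CommSemiring S] (φ : R →+* S)
    {a b s : R} (hab : IsCoprime a b) {P : S[X]} (ha : C (φ (a * s)) * P ∈ lifts φ)
    (hb : C (φ (b * s)) * P ∈ lifts φ) : C (φ s) * P ∈ lifts φ := by
  obtain ⟨x, y, hxy⟩ := hab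
  have hP :
      C (φ s) * P = C (φ x) * (C (φ (a * s)) * P) + C (φ y) * (C (φ (b * s)) * P) := by
    simp only [← mul_assoc, ← map_mul, ← add_mul, ← map_add, hxy, one_mul]
  rw [hP]
  exact add_mem (mul_mem (C_mem_lifts φ x) ha) (mul_mem (C_mem_lifts φ y) hb)

theorem exists_C_leadingCoeff_pow_mul_mem_lifts {R S : Type*} [CommRing R] [IsDomain R]
    [CommRing S] [IsDomain S] {φ : R →+* S} (hφ : Function.Injective φ) {f g u v : R[X]}
    {s : R} {p q : S[X]} (hcop : IsCoprime (f.map φ) (g.map φ))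
    (hp : p.degree < (g.map φ).degree) (h : p * f.map φ + q * g.map φ = 1)
    (hs : u * f + v * g = C s) :
    ∃ k : ℕ, C (φ (g.leadingCoeff ^ k * s)) * p ∈ lifts φ ∧
      C (φ (g.leadingCoeff ^ k * s)) * q ∈ lifts φ := by
  have hg : g ≠ 0 := by rintro rfl; simp at hp
  obtain ⟨k, a, b, hab, hb⟩ := exists_C_leadingCoeff_pow_mul_eq_mul_add hg u
  set w := C g.leadingCoeff ^ k * v + a * f
  set t := φ (g.leadingCoeff ^ k * s)
  have hbw : b * f + w * g = C (g.leadingCoeff ^ k * s) := by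
    rw [C_mul, C_pow]; linear_combination C g.leadingCoeff ^ k * hs - f * hab
  have hmap :
      b.map φ * f.map φ + w.map φ * g.map φ = C t * p * f.map φ + C t * q * g.map φ := by
    have := congrArg (map φ) hbw
    simp only [Polynomial.map_add, Polynomial.map_mul, map_C] at this
    linear_combination this - C t * h
  have hb' : (b.map φ).degree < (g.map φ).degree :=
    degree_map_le.trans_lt (by rwa [degree_map_eq_of_injective hφ])
  have htp : (C t * p).degree < (g.map φ).degree := by
    rw [C_mul']; exact (degree_smul_le _ _).trans_lt hp
  obtain ⟨hbp, hwq⟩ := hcop.eq_of_mul_add_mul_eq hb' htp hmap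
  exact ⟨k, (mem_lifts _).2 ⟨b, hbp⟩, (mem_lifts _).2 ⟨w, hwq⟩⟩

end Polynomial

theorem IsBezoutDenom.exists_mul_add_mul_eq_C {f g : ℤ[X]} {B : ℤ} (hB : IsBezoutDenom f g B) :
    ∃ u v : ℤ[X], u * f + v * g = C B := by
  obtain ⟨-, p, q, -, -, h, ⟨P, hP⟩, ⟨Q, hQ⟩⟩ := hB
  refine ⟨P, Q, map_injective (Int.castRingHom ℚ) Int.cast_injective ?_⟩
  rw [Polynomial.map_add, Polynomial.map_mul, Polynomial.map_mul, hP, hQ, map_C, eq_intCast]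
  linear_combination C (B : ℚ) * h

theorem IsBezoutDenom.of_mul_add_mul_eq_C {f g : ℤ[X]} {B s : ℤ} (hB : IsBezoutDenom f g B)
    (hcop : IsCoprime (f.map (Int.castRingHom ℚ)) (g.map (Int.castRingHom ℚ)))
    (hd : Int.gcd f.leadingCoeff g.leadingCoeff = 1) (hs : 0 < s)
    (hsmem : ∃ u v : ℤ[X], u * f + v * g = C s) : IsBezoutDenom f g s := by
  obtain ⟨-, p, q, hp, hq, h, -, -⟩ := hB
  obtain ⟨u, v, huv⟩ := hsmem
  have hφ : Function.Injective (Int.castRingHom ℚ) := Int.cast_injective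
  obtain ⟨k, hpk, hqk⟩ := exists_C_leadingCoeff_pow_mul_mem_lifts hφ hcop hp h huv
  obtain ⟨j, hqj, hpj⟩ := exists_C_leadingCoeff_pow_mul_mem_lifts hφ hcop.symm hq
    (by rw [add_comm]; exact h) (by rw [add_comm]; exact huv)
  have hLcop : IsCoprime (f.leadingCoeff ^ j) (g.leadingCoeff ^ k) :=
    (Int.isCoprime_iff_gcd_eq_one.mpr hd).pow
  refine ⟨hs, p, q, hp, hq, h, ?_, ?_⟩
  · exact (mem_lifts _).1 (mem_lifts_of_isCoprime _ hLcop hpj hpk)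
  · exact (mem_lifts _).1 (mem_lifts_of_isCoprime _ hLcop hqj hqk)

theorem statement_8_general (f g : Polynomial ℤ)
    (hcop : IsCoprime (f.map (Int.castRingHom ℚ)) (g.map (Int.castRingHom ℚ)))
    (r : ℤ) (hrpos : 0 < r)
    (hrmem : ∃ u v : Polynomial ℤ, u * f + v * g = Polynomial.C r)
    (hrmin : ∀ s : ℤ, 0 < s →
      (∃ u v : Polynomial ℤ, u * f + v * g = Polynomial.C s) → r ≤ s)
    (B : ℤ) (hB : IsBezoutDenom f g B)
    (hBmin : ∀ B' : ℤ, IsBezoutDenom f g B' → B ≤ B')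
    (hd : Int.gcd f.leadingCoeff g.leadingCoeff = 1) :
    B = r :=
  le_antisymm (hBmin r (hB.of_mul_add_mul_eq_C hcop hd hrpos hrmem))
    (hrmin B hB.1 hB.exists_mul_add_mul_eq_C)

theorem statement_8 (f g : Polynomial ℤ)
    (hf : 0 < f.natDegree) (hg : 0 < g.natDegree)
    (hcop : IsCoprime (f.map (Int.castRingHom ℚ)) (g.map (Int.castRingHom ℚ)))
    (r : ℤ) (hrpos : 0 < r)
    (hrmem : ∃ u v : Polynomial ℤ, u * f + v * g = Polynomial.C r)
    (hrmin : ∀ s : ℤ, 0 < s →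
      (∃ u v : Polynomial ℤ, u * f + v * g = Polynomial.C s) → r ≤ s)
    (B : ℤ) (hB : IsBezoutDenom f g B)
    (hBmin : ∀ B' : ℤ, IsBezoutDenom f g B' → B ≤ B')
    (hd : Int.gcd f.leadingCoeff g.leadingCoeff = 1) :
    B = r :=
  statement_8_general f g hcop r hrpos hrmem hrmin B hB hBmin hd
end

section
/- Let f and g be coprime integer polynomials of positive degree and d = gcd(L(f), L(g)). Then a prime p divides |Res(f,g)| if and only if p divides d·r(f,g). -/
/-!
`sylvesterMatrix f g` is the transpose of the usual Sylvester matrix with rows and columns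
reversed, so `res f g` is the usual resultant, which lies in the ideal `(f, g) ∩ ℤ = r ℤ`; hence `r`
divides it. If `p` divides both leading coefficients, then modulo `p` both polynomials drop in
degree and the resultant vanishes. Conversely, if `p ∤ r`, the reductions of `f` and `g` modulo
`p` are coprime over `𝔽_p`, and if moreover `p` does not divide, say, `L(f)`, the reduction of `f`
keeps its degree; so the reduced resultant is a power of `L(f)` times the resultant of two coprime
polynomials over a field, which is nonzero.
-/

open Polynomial

/-- The Sylvester matrix of two integer polynomials. -/
noncomputable def sylvesterMatrix (f g : Polynomial ℤ) :
    Matrix (Fin (g.natDegree + f.natDegree)) (Fin (g.natDegree + f.natDegree)) ℤ :=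
  Matrix.of fun i j =>
    if (i : ℕ) < g.natDegree then
      if (i : ℕ) ≤ (j : ℕ) ∧ (j : ℕ) ≤ (i : ℕ) + f.natDegree then
        f.coeff (f.natDegree + i - j)
      else 0
    else
      if (i : ℕ) - g.natDegree ≤ (j : ℕ) ∧ (j : ℕ) ≤ (i : ℕ) - g.natDegree + g.natDegree then
        g.coeff (g.natDegree + ((i : ℕ) - g.natDegree) - j)
      else 0

/-- The resultant of two integer polynomials, as the determinant of their Sylvester matrix. -/
noncomputable def res (f g : Polynomial ℤ) : ℤ := (sylvesterMatrix f g).det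

open Matrix

theorem sylvesterMatrix_eq_reindex_transpose_sylvester (f g : ℤ[X]) :
    sylvesterMatrix f g = ((sylvester f g f.natDegree g.natDegree)ᵀ).reindex
      (Fin.revPerm.trans (finCongr (add_comm _ _)))
      (Fin.revPerm.trans (finCongr (add_comm _ _))) := by
  ext i j
  have := i.isLt
  have := j.isLt
  simp only [sylvesterMatrix, sylvester, reindex_apply, submatrix_apply, transpose_apply, of_apply,
    Fin.addCases, Equiv.symm_trans_apply, finCongr_symm, finCongr_apply, Fin.revPerm_symm,
    Fin.revPerm_apply, Set.mem_Icc, Fin.val_rev, Fin.val_cast, Fin.val_castLT, Fin.val_subNat,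
    eq_rec_constant]
  split_ifs <;> first | omega | (congr 1; omega)

theorem res_eq_resultant (f g : ℤ[X]) : res f g = f.resultant g := by
  rw [res, sylvesterMatrix_eq_reindex_transpose_sylvester, det_reindex_self, det_transpose,
    resultant]

section

variable {R : Type*} [CommRing R]

theorem map_resultant_eq_zero {S : Type*} [CommRing S] (φ : R →+* S) {f g : R[X]}
    (hf : 0 < f.natDegree) (hg : 0 < g.natDegree)
    (hφf : φ f.leadingCoeff = 0) (hφg : φ g.leadingCoeff = 0) :
    φ (f.resultant g) = 0 := by
  rw [← resultant_map_map]
  exact resultant_eq_zero_of_lt_lt _ _ _ _ (natDegree_map_lt' hφf hf) (natDegree_map_lt' hφg hg)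

theorem resultant_ne_zero_of_degree_eq {K : Type*} [CommRing K] [IsDomain K] {f g : K[X]}
    {m n : ℕ} (hcop : IsCoprime f g) (hf : f.degree = m) (hg : g.natDegree ≤ n) :
    f.resultant g m n ≠ 0 := by
  have hf0 : f ≠ 0 := by
    rintro rfl
    simp at hf
  obtain rfl : f.natDegree = m := natDegree_eq_of_degree_eq_some hf
  obtain ⟨k, rfl⟩ := Nat.exists_eq_add_of_le hg
  rw [resultant_add_right_deg _ _ _ _ _ le_rfl]
  exact mul_ne_zero (pow_ne_zero _ (leadingCoeff_ne_zero.2 hf0)) (resultant_ne_zero f g hcop)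

theorem isCoprime_map_of_mul_add_mul_eq_C {K : Type*} [Field K] (φ : R →+* K) {f g u v : R[X]}
    {s : R} (huv : u * f + v * g = C s) (hφs : φ s ≠ 0) :
    IsCoprime (f.map φ) (g.map φ) := by
  refine ⟨C (φ s)⁻¹ * u.map φ, C (φ s)⁻¹ * v.map φ, ?_⟩
  have hmap := congrArg (map φ) huv
  simp only [Polynomial.map_add, Polynomial.map_mul, map_C] at hmap
  rw [mul_assoc, mul_assoc, ← mul_add, hmap, ← C_mul, inv_mul_cancel₀ hφs, C_1]

theorem map_resultant_ne_zero_of_map_leadingCoeff_ne_zero {K : Type*} [Field K] (φ : R →+* K)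
    {f g u v : R[X]} {s : R} (huv : u * f + v * g = C s) (hφs : φ s ≠ 0)
    (hφf : φ f.leadingCoeff ≠ 0) :
    φ (f.resultant g) ≠ 0 := by
  have hf0 : f ≠ 0 := fun h => hφf (by rw [h, leadingCoeff_zero, map_zero])
  rw [← resultant_map_map]
  refine resultant_ne_zero_of_degree_eq (isCoprime_map_of_mul_add_mul_eq_C φ huv hφs) ?_
    natDegree_map_le
  rw [degree_map_eq_of_leadingCoeff_ne_zero φ hφf, degree_eq_natDegree hf0]

theorem map_resultant_ne_zero {K : Type*} [Field K] (φ : R →+* K) {f g u v : R[X]} {s : R}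
    (huv : u * f + v * g = C s) (hφs : φ s ≠ 0)
    (hφ : φ f.leadingCoeff ≠ 0 ∨ φ g.leadingCoeff ≠ 0) :
    φ (f.resultant g) ≠ 0 := by
  rcases hφ with hφf | hφg
  · exact map_resultant_ne_zero_of_map_leadingCoeff_ne_zero φ huv hφs hφf
  · have hvu : v * g + u * f = C s := by rw [add_comm, huv]
    rw [resultant_comm, map_mul, map_pow, map_neg, map_one]
    exact mul_ne_zero (pow_ne_zero _ (neg_ne_zero.2 one_ne_zero))
      (map_resultant_ne_zero_of_map_leadingCoeff_ne_zero φ hvu hφs hφg)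

end

theorem Ideal.dvd_of_isLeast {I : Ideal ℤ} {r s : ℤ} (hr : IsLeast {t | t ∈ I ∧ 0 < t} r)
    (hs : s ∈ I) : r ∣ s := by
  have hI : I.toAddSubgroup = AddSubgroup.closure {r} := AddSubgroup.cyclic_of_min hr
  obtain ⟨k, rfl⟩ := AddSubgroup.mem_closure_singleton.1 (hI ▸ hs : s ∈ AddSubgroup.closure {r})
  exact Dvd.intro_left k (smul_eq_mul k r).symm

theorem statement_12_general (f g : Polynomial ℤ)
    (hf : 0 < f.natDegree) (hg : 0 < g.natDegree)
    (r : ℤ) (hrpos : 0 < r)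
    (hrmem : ∃ u v : Polynomial ℤ, u * f + v * g = Polynomial.C r)
    (hrmin : ∀ s : ℤ, 0 < s →
      (∃ u v : Polynomial ℤ, u * f + v * g = Polynomial.C s) → r ≤ s) :
    ∀ p : ℕ, p.Prime →
      ((p : ℤ) ∣ |res f g| ↔ (p : ℤ) ∣ (Int.gcd f.leadingCoeff g.leadingCoeff : ℤ) * r) := by
  intro p hp
  have : Fact p.Prime := ⟨hp⟩
  let φ := Int.castRingHom (ZMod p)
  have hdvd_iff (x : ℤ) : (p : ℤ) ∣ x ↔ φ x = 0 := (ZMod.intCast_zmod_eq_zero_iff_dvd x p).symm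
  let I : Ideal ℤ := (Ideal.span {f, g}).comap C
  have hI (s : ℤ) : s ∈ I ↔ ∃ u v : ℤ[X], u * f + v * g = C s := Ideal.mem_span_pair
  have hr_dvd : r ∣ f.resultant g := by
    refine Ideal.dvd_of_isLeast ⟨⟨(hI r).2 hrmem, hrpos⟩,
      fun t ⟨ht, ht0⟩ => hrmin t ht0 ((hI t).1 ht)⟩ ((hI _).2 ?_)
    obtain ⟨a, b, -, -, hab⟩ := exists_mul_add_mul_eq_C_resultant f g le_rfl le_rfl (.inl hf.ne')
    exact ⟨a, b, by rw [← hab]; ring⟩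
  obtain ⟨u, v, huv⟩ := hrmem
  rw [dvd_abs, res_eq_resultant, (Nat.prime_iff_prime_int.mp hp).dvd_mul, Int.dvd_coe_gcd_iff]
  refine ⟨fun hres => ?_, ?_⟩
  · by_contra hnot
    rw [not_or, not_and_or, hdvd_iff, hdvd_iff, hdvd_iff] at hnot
    exact map_resultant_ne_zero φ huv hnot.2 hnot.1 ((hdvd_iff _).1 hres)
  · rintro (⟨hpf, hpg⟩ | hpr)
    · exact (hdvd_iff _).2 (map_resultant_eq_zero φ hf hg ((hdvd_iff _).1 hpf) ((hdvd_iff _).1 hpg))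
    · exact hpr.trans hr_dvd

theorem statement_12 (f g : Polynomial ℤ)
    (hf : 0 < f.natDegree) (hg : 0 < g.natDegree)
    (hcop : IsCoprime (f.map (Int.castRingHom ℚ)) (g.map (Int.castRingHom ℚ)))
    (r : ℤ) (hrpos : 0 < r)
    (hrmem : ∃ u v : Polynomial ℤ, u * f + v * g = Polynomial.C r)
    (hrmin : ∀ s : ℤ, 0 < s →
      (∃ u v : Polynomial ℤ, u * f + v * g = Polynomial.C s) → r ≤ s) :
    ∀ p : ℕ, p.Prime →
      ((p : ℤ) ∣ |res f g| ↔ (p : ℤ) ∣ (Int.gcd f.leadingCoeff g.leadingCoeff : ℤ) * r) :=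
  statement_12_general f g hf hg r hrpos hrmem hrmin
end

section
/- Let f and g be coprime integer polynomials of positive degree with gcd(L(f), L(g)) > 1. Then B(f,g) ≠ |Res(f,g)| and r(f,g) ≠ |Res(f,g)|. -/
open Polynomial

/-!
If `d > 1` divides both leading coefficients, it divides the first column of the Sylvester
matrix `S`, hence `Res(f, g) = det S` and every entry of the last row of `adj S`. With
`m = deg f`, `n = deg g`, applying that row to
`S · (xᵐ⁺ⁿ⁻¹, …, x, 1)ᵀ = (xⁿ⁻¹f, …, f, xᵐ⁻¹g, …, g)ᵀ` writes `Res(f, g) / d` as `u f + v g`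
with `deg u < deg g` and `deg v < deg f`. So `|Res(f, g)| / d` is both a Bezout denominator and a
positive element of `(f, g) ∩ ℤ` (unless `Res(f, g) = 0`), and it is smaller than `|Res(f, g)|`.
-/

open Finset Matrix

section Adjugate

variable {n R : Type*} [Fintype n] [DecidableEq n] [CommRing R]

theorem Matrix.dvd_det_of_forall_dvd_col (A : Matrix n n R) {j : n} {d : R}
    (h : ∀ i, d ∣ A i j) : d ∣ A.det := by
  choose c hc using h
  have hA : A = A.updateCol j (d • c) := by
    conv_lhs => rw [← A.updateCol_eq_self j]
    congr 1
    funext i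
    exact hc i
  rw [hA, det_updateCol_smul]
  exact dvd_mul_right _ _

theorem Matrix.dvd_adjugate_apply_of_forall_dvd_col (A : Matrix n n R) {j k : n} (hjk : j ≠ k)
    {d : R} (h : ∀ i, d ∣ A i j) (i : n) : d ∣ A.adjugate k i := by
  rw [adjugate_apply]
  refine (A.updateRow i (Pi.single k 1)).dvd_det_of_forall_dvd_col (j := j) fun l => ?_
  rcases eq_or_ne l i with rfl | hl
  · simp [hjk]
  · simpa [updateRow_ne hl] using h l

theorem Matrix.sum_adjugate_mul_map_mulVec {S : Type*} [CommRing S] (φ : R →+* S)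
    (M : Matrix n n R) (w : n → S) (k : n) :
    ∑ i, φ (M.adjugate k i) * (M.map φ *ᵥ w) i = φ M.det * w k := by
  have h := congrFun (congrArg (· *ᵥ w) (adjugate_mul (M.map φ))) k
  simp only [← mulVec_mulVec, smul_mulVec, one_mulVec] at h
  rw [← RingHom.mapMatrix_apply, ← RingHom.map_adjugate, ← RingHom.map_det] at h
  simpa [mulVec, dotProduct] using h

end Adjugate

namespace Polynomial

variable {R : Type*} [Semiring R]

theorem sum_range_ite_coeff_mul_X_pow (p : R[X]) {a N : ℕ} (hN : a + p.natDegree < N) :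
    ∑ j ∈ range N, (if a ≤ j ∧ j ≤ a + p.natDegree then
      C (p.coeff (p.natDegree + a - j)) * X ^ (N - 1 - j) else 0) =
      X ^ (N - 1 - (a + p.natDegree)) * p := by
  set b := p.natDegree
  rw [← sum_filter]
  have hwindow : (range N).filter (fun j => a ≤ j ∧ j ≤ a + b) = Icc a (a + b) := by
    ext j
    simp only [mem_filter, mem_range, mem_Icc]
    omega
  conv_rhs => rw [p.as_sum_range' (b + 1) (Nat.lt_succ_self b), mul_sum]
  rw [hwindow]
  refine sum_nbij' (fun j => a + b - j) (fun k => a + b - k) ?_ ?_ ?_ ?_ ?_ <;>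
    intro j hj <;> simp only [mem_Icc, mem_range] at hj ⊢
  · omega
  · omega
  · omega
  · omega
  · rw [← C_mul_X_pow_eq_monomial, show b + a - j = a + b - j by omega,
      show N - 1 - j = (N - 1 - (a + b)) + (a + b - j) by omega, pow_add, ← mul_assoc,
      ← mul_assoc, X_pow_mul]

end Polynomial

section Sylvester

variable (f g : ℤ[X])

theorem sylvesterMatrix_map_mulVec_castAdd_rev (i : Fin g.natDegree) :
    ((sylvesterMatrix f g).map C *ᵥ fun j => X ^ (g.natDegree + f.natDegree - 1 - j))
      (Fin.castAdd f.natDegree i.rev) = X ^ (i : ℕ) * f := by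
  have hi := i.isLt
  simp only [mulVec, dotProduct, map_apply, sylvesterMatrix, of_apply, Fin.val_castAdd,
    Fin.val_rev, if_pos (show g.natDegree - (i + 1) < g.natDegree by omega), apply_ite C, C_0,
    ite_mul, zero_mul]
  rw [Fin.sum_univ_eq_sum_range (fun j => if g.natDegree - (i + 1) ≤ j ∧
      j ≤ g.natDegree - (i + 1) + f.natDegree then
      C (f.coeff (f.natDegree + (g.natDegree - (i + 1)) - j)) *
        X ^ (g.natDegree + f.natDegree - 1 - j) else 0),
    sum_range_ite_coeff_mul_X_pow f (by omega)]
  congr 2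
  omega

theorem sylvesterMatrix_map_mulVec_natAdd_rev (i : Fin f.natDegree) :
    ((sylvesterMatrix f g).map C *ᵥ fun j => X ^ (g.natDegree + f.natDegree - 1 - j))
      (Fin.natAdd g.natDegree i.rev) = X ^ (i : ℕ) * g := by
  have hi := i.isLt
  simp only [mulVec, dotProduct, map_apply, sylvesterMatrix, of_apply, Fin.val_natAdd,
    Fin.val_rev, if_neg (show ¬ g.natDegree + (f.natDegree - (i + 1)) < g.natDegree by omega),
    Nat.add_sub_cancel_left, apply_ite C, C_0, ite_mul, zero_mul]
  rw [Fin.sum_univ_eq_sum_range (fun j => if f.natDegree - (i + 1) ≤ j ∧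
      j ≤ f.natDegree - (i + 1) + g.natDegree then
      C (g.coeff (g.natDegree + (f.natDegree - (i + 1)) - j)) *
        X ^ (g.natDegree + f.natDegree - 1 - j) else 0),
    sum_range_ite_coeff_mul_X_pow g (by omega)]
  congr 2
  omega

theorem dvd_sylvesterMatrix_apply_of_val_eq_zero {d : ℤ} (hdf : d ∣ f.leadingCoeff)
    (hdg : d ∣ g.leadingCoeff) (i : Fin (g.natDegree + f.natDegree))
    {j : Fin (g.natDegree + f.natDegree)} (hj : (j : ℕ) = 0) : d ∣ sylvesterMatrix f g i j := by
  simp only [sylvesterMatrix, of_apply, hj]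
  split_ifs
  · rwa [show f.natDegree + i - 0 = f.natDegree by omega]
  · exact dvd_zero d
  · rwa [show g.natDegree + (i - g.natDegree) - 0 = g.natDegree by omega]
  · exact dvd_zero d

end Sylvester

def IsSylvesterCombination (f g : ℤ[X]) (R : ℤ) : Prop :=
  ∃ u v : ℤ[X], u.degree < g.degree ∧ v.degree < f.degree ∧ u * f + v * g = C R

theorem isSylvesterCombination_of_dvd_leadingCoeff {f g : ℤ[X]} (hf : 0 < f.natDegree)
    (hg : 0 < g.natDegree) {d : ℤ} (hd : d ≠ 0) (hdf : d ∣ f.leadingCoeff)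
    (hdg : d ∣ g.leadingCoeff) : ∃ R, res f g = d * R ∧ IsSylvesterCombination f g R := by
  set S := sylvesterMatrix f g
  let z : Fin (g.natDegree + f.natDegree) := ⟨0, by omega⟩
  let last : Fin (g.natDegree + f.natDegree) := ⟨g.natDegree + f.natDegree - 1, by omega⟩
  have hcol : ∀ i, d ∣ S i z := fun i =>
    dvd_sylvesterMatrix_apply_of_val_eq_zero f g hdf hdg i rfl
  obtain ⟨R, hR⟩ := S.dvd_det_of_forall_dvd_col hcol
  choose a ha using S.dvd_adjugate_apply_of_forall_dvd_col (k := last)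
    (fun h => by simp [z, last, Fin.ext_iff] at h; omega) hcol
  have hsum := S.sum_adjugate_mul_map_mulVec C
    (fun j => X ^ (g.natDegree + f.natDegree - 1 - j)) last
  simp only [ha, hR, C_mul, mul_assoc, ← mul_sum, last, Nat.sub_self, pow_zero, mul_one] at hsum
  have hcomb := mul_left_cancel₀ (C_ne_zero.2 hd) hsum
  rw [Fin.sum_univ_add] at hcomb
  refine ⟨R, hR, ∑ i : Fin g.natDegree, C (a (Fin.castAdd _ i.rev)) * X ^ (i : ℕ),
    ∑ i : Fin f.natDegree, C (a (Fin.natAdd _ i.rev)) * X ^ (i : ℕ), ?_, ?_, ?_⟩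
  · rw [degree_eq_natDegree (ne_zero_of_natDegree_gt hg)]
    exact degree_sum_fin_lt _
  · rw [degree_eq_natDegree (ne_zero_of_natDegree_gt hf)]
    exact degree_sum_fin_lt _
  · rw [← hcomb, sum_mul, sum_mul]
    congr 1 <;> refine Fintype.sum_equiv Fin.revPerm _ _ fun i => ?_
    · rw [Fin.revPerm_apply, sylvesterMatrix_map_mulVec_castAdd_rev, mul_assoc]
    · rw [Fin.revPerm_apply, sylvesterMatrix_map_mulVec_natAdd_rev, mul_assoc]

namespace IsSylvesterCombination

variable {f g : ℤ[X]} {R : ℤ}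

theorem abs (h : IsSylvesterCombination f g R) : IsSylvesterCombination f g |R| := by
  obtain ⟨u, v, hu, hv, huv⟩ := h
  rcases abs_choice R with hR | hR
  · rw [hR]
    exact ⟨u, v, hu, hv, huv⟩
  · rw [hR]
    refine ⟨-u, -v, by rwa [degree_neg], by rwa [degree_neg], ?_⟩
    rw [C_neg, ← huv]
    ring

theorem isBezoutDenom (h : IsSylvesterCombination f g R) (hR : 0 < R) : IsBezoutDenom f g R := by
  obtain ⟨u, v, hu, hv, huv⟩ := h
  have hinj : Function.Injective (Int.castRingHom ℚ) := Int.cast_injective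
  have hRQ : (R : ℚ) ≠ 0 := by exact_mod_cast hR.ne'
  have hRinv : (R : ℚ)⁻¹ ≠ 0 := inv_ne_zero hRQ
  have hcancel (p : ℤ[X]) : C (R : ℚ) * (C (R : ℚ)⁻¹ * p.map (Int.castRingHom ℚ)) =
      p.map (Int.castRingHom ℚ) := by
    rw [← mul_assoc, ← C_mul, mul_inv_cancel₀ hRQ, C_1, one_mul]
  refine ⟨hR, C (R : ℚ)⁻¹ * u.map (Int.castRingHom ℚ), C (R : ℚ)⁻¹ * v.map (Int.castRingHom ℚ),
    ?_, ?_, ?_, ⟨u, (hcancel u).symm⟩, ⟨v, (hcancel v).symm⟩⟩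
  · rwa [degree_C_mul hRinv, degree_map_eq_of_injective hinj, degree_map_eq_of_injective hinj]
  · rwa [degree_C_mul hRinv, degree_map_eq_of_injective hinj, degree_map_eq_of_injective hinj]
  · rw [mul_assoc, mul_assoc, ← mul_add, ← Polynomial.map_mul, ← Polynomial.map_mul,
      ← Polynomial.map_add, huv, map_C, eq_intCast, ← C_mul,
      inv_mul_cancel₀ hRQ, C_1]

end IsSylvesterCombination

theorem statement_14_general (f g : Polynomial ℤ)
    (hf : 0 < f.natDegree) (hg : 0 < g.natDegree)
    (r : ℤ) (hrpos : 0 < r)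
    (hrmin : ∀ s : ℤ, 0 < s →
      (∃ u v : Polynomial ℤ, u * f + v * g = Polynomial.C s) → r ≤ s)
    (B : ℤ) (hB : IsBezoutDenom f g B)
    (hBmin : ∀ B' : ℤ, IsBezoutDenom f g B' → B ≤ B')
    (hd : 1 < Int.gcd f.leadingCoeff g.leadingCoeff) :
    B ≠ |res f g| ∧ r ≠ |res f g| := by
  obtain ⟨R, hres, hR⟩ := isSylvesterCombination_of_dvd_leadingCoeff hf hg
    (by omega : (Int.gcd f.leadingCoeff g.leadingCoeff : ℤ) ≠ 0)
    (Int.gcd_dvd_left _ _) (Int.gcd_dvd_right _ _)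
  rcases eq_or_ne R 0 with rfl | hR0
  · rw [hres, mul_zero, abs_zero]
    exact ⟨hB.1.ne', hrpos.ne'⟩
  have hRpos : 0 < |R| := abs_pos.2 hR0
  have hlt : |R| < |res f g| := by
    rw [hres, abs_mul, Int.abs_natCast]
    exact lt_mul_left hRpos (by exact_mod_cast hd)
  have hmem : ∃ u v : ℤ[X], u * f + v * g = C |R| :=
    let ⟨u, v, _, _, huv⟩ := hR.abs; ⟨u, v, huv⟩
  exact ⟨((hBmin _ (hR.abs.isBezoutDenom hRpos)).trans_lt hlt).ne,
    ((hrmin _ hRpos hmem).trans_lt hlt).ne⟩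

theorem statement_14 (f g : Polynomial ℤ)
    (hf : 0 < f.natDegree) (hg : 0 < g.natDegree)
    (hcop : IsCoprime (f.map (Int.castRingHom ℚ)) (g.map (Int.castRingHom ℚ)))
    (r : ℤ) (hrpos : 0 < r)
    (hrmem : ∃ u v : Polynomial ℤ, u * f + v * g = Polynomial.C r)
    (hrmin : ∀ s : ℤ, 0 < s →
      (∃ u v : Polynomial ℤ, u * f + v * g = Polynomial.C s) → r ≤ s)
    (B : ℤ) (hB : IsBezoutDenom f g B)
    (hBmin : ∀ B' : ℤ, IsBezoutDenom f g B' → B ≤ B')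
    (hd : 1 < Int.gcd f.leadingCoeff g.leadingCoeff) :
    B ≠ |res f g| ∧ r ≠ |res f g| :=
  statement_14_general f g hf hg r hrpos hrmin B hB hBmin hd
end
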